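/- arXiv:2602.12926 — 7 statements merged into one kernel-verified Lean document; each statement's English description precedes it below -/
import Mathlib

section
/- Let G be a K_{t,t}-free simple graph and let P be a subset of V(G) with |P| ≥ t². Then fewer than t vertices v of G satisfy |P \ N(v)| < t (i.e., fewer than t vertices are t-complete to P). -/
open Finset

variable {V : Type*}

/-- `G` contains no `K_{t,t}` subgraph: there are no two disjoint vertex sets of size `t`
with all edges between them present. -/
def KttFree (t : ℕ) (G : SimpleGraph V) : Prop :=
  ¬ ∃ A B : Finset V, Disjoint A B ∧ A.card = t ∧ B.card = t ∧
      ∀ a ∈ A, ∀ b ∈ B, G.Adj a b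

/-- `v` is `t`-complete to `P`: it has fewer than `t` non-neighbors in `P`. -/
def tComplete (G : SimpleGraph V) (t : ℕ) (v : V) (P : Finset V) : Prop :=
  ((P : Set V) \ {u | G.Adj v u}).ncard < t

section

variable {G : SimpleGraph V} {t : ℕ}

lemma KttFree.pos (hG : KttFree t G) : 0 < t := by
  by_contra! ht
  exact hG ⟨∅, ∅, by simp_all⟩

/-- Disjointness comes for free: a vertex of `A ∩ B` would be adjacent to itself. -/
lemma KttFree.not_forall_adj (hG : KttFree t G) {A B : Finset V} (hA : t ≤ A.card)
    (hB : t ≤ B.card) : ¬ ∀ a ∈ A, ∀ b ∈ B, G.Adj a b := by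
  intro hAB
  obtain ⟨A', hA'A, hA'⟩ := exists_subset_card_eq hA
  obtain ⟨B', hB'B, hB'⟩ := exists_subset_card_eq hB
  refine hG ⟨A', B', disjoint_left.2 fun a ha ha' => ?_, hA', hB',
    fun a ha b hb => hAB a (hA'A ha) b (hB'B hb)⟩
  exact G.irrefl (hAB a (hA'A ha) a (hB'B ha'))

lemma tComplete_iff_card_filter_not_adj_lt [DecidableRel G.Adj] {v : V} {P : Finset V} :
    tComplete G t v P ↔ (P.filter (¬ G.Adj v ·)).card < t := by
  rw [tComplete, ← Set.ncard_coe_finset]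
  congr!
  ext u
  simp

lemma card_sdiff_filter_forall_adj_le [DecidableEq V] [DecidableRel G.Adj] (A P : Finset V) :
    (P \ P.filter (fun u => ∀ v ∈ A, G.Adj v u)).card ≤
      ∑ v ∈ A, (P.filter (¬ G.Adj v ·)).card := by
  refine (card_le_card fun u hu => ?_).trans card_biUnion_le
  simp only [mem_sdiff, mem_filter, not_and, not_forall] at hu
  obtain ⟨v, hv, huv⟩ := hu.2 hu.1
  exact mem_biUnion.2 ⟨v, hv, mem_filter.2 ⟨hu.1, huv⟩⟩

/-- `t` vertices that are `t`-complete to `P` miss at most `t (t - 1)` vertices of `P` in total,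
so if `|P| ≥ t²` they have at least `t` common neighbours in `P`, giving a `K_{t,t}`. -/
lemma KttFree.card_lt_of_forall_tComplete (hG : KttFree t G) {A P : Finset V}
    (hA : ∀ v ∈ A, tComplete G t v P) (hP : t ^ 2 ≤ P.card) : A.card < t := by
  classical
  by_contra! hAt
  obtain ⟨A', hA'A, hA'⟩ := exists_subset_card_eq hAt
  set B := P.filter fun u => ∀ v ∈ A', G.Adj v u
  have hmissed : (P \ B).card ≤ t * (t - 1) :=
    calc (P \ B).card ≤ ∑ v ∈ A', (P.filter (¬ G.Adj v ·)).card :=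
          card_sdiff_filter_forall_adj_le A' P
      _ ≤ ∑ _v ∈ A', (t - 1) := sum_le_sum fun v hv =>
          Nat.le_sub_one_of_lt (tComplete_iff_card_filter_not_adj_lt.1 (hA v (hA'A hv)))
      _ = t * (t - 1) := by rw [sum_const, hA', smul_eq_mul]
  have hB : t ≤ B.card := by
    have hsplit := card_sdiff_add_card_eq_card (s := B) (filter_subset _ P)
    have hsq : t * (t - 1) + t = t ^ 2 := by cases t <;> simp [sq, Nat.mul_succ]
    omega
  exact hG.not_forall_adj hA'.ge hB fun a ha b hb => (mem_filter.1 hb).2 a ha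

end

theorem stmt0_general (t : ℕ) (G : SimpleGraph V) (hG : KttFree t G)
    (P : Finset V) (hP : t ^ 2 ≤ P.card) :
    {v : V | tComplete G t v P}.ncard < t := by
  by_contra! h
  have hfin : {v : V | tComplete G t v P}.Finite :=
    Set.finite_of_ncard_pos (hG.pos.trans_le h)
  rw [Set.ncard_eq_toFinset_card _ hfin] at h
  exact h.not_gt (hG.card_lt_of_forall_tComplete (fun v hv => by simpa using hv) hP)

/-- In a `K_{t,t}`-free graph, for any set `P` with `|P| ≥ t²`,
fewer than `t` vertices are `t`-complete to `P`. -/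
theorem stmt0 [Fintype V] (t : ℕ) (G : SimpleGraph V) (hG : KttFree t G)
    (P : Finset V) (hP : t ^ 2 ≤ P.card) :
    {v : V | tComplete G t v P}.ncard < t :=
  stmt0_general t G hG P hP
end

section
/- Let G be a K_{t,t}-free simple graph, let 𝒫 be a partition of V(G), and let 𝒫' be a refinement of 𝒫 obtained by splitting one part of 𝒫 into two nonempty parts (so |𝒫'| = |𝒫| + 1). Then |Sparsify(G, 𝒫', t) \ Sparsify(G, 𝒫, t)| < 2t². -/
/-!
A vertex of `Sparsify(G, 𝒫', t)` outside `Sparsify(G, 𝒫, t)` owes its membership to a part of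
`𝒫'` that is not a part of `𝒫`. There are at most two such parts: every part of `𝒫` that is not
a part of `𝒫'` contains at least two of them, so `2 |𝒫 \ 𝒫'| ≤ |𝒫' \ 𝒫| = |𝒫 \ 𝒫'| + 1`.
A part `A` contributes either itself, when `|A| < t²`, or the vertices with fewer than `t`
non-neighbours in `A`, when `|A| ≥ t²`. In the second case there are fewer than `t` such
vertices: `t` of them together miss at most `t(t - 1)` vertices of `A`, which leaves `t` common
neighbours in `A` and hence a `K_{t,t}`. So each new part contributes fewer than `t²` vertices.
-/

open Finset

variable {V : Type*}

/-- `Sparsify G 𝒫 t`: vertices in a part of size `< t²`, or `t`-complete to a part of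
size `≥ t²`. -/
def Sparsify [Fintype V] [DecidableEq V] (G : SimpleGraph V)
    (P : Finpartition (Finset.univ : Finset V)) (t : ℕ) : Set V :=
  {v | (∃ A ∈ P.parts, v ∈ A ∧ A.card < t ^ 2) ∨
       ∃ A ∈ P.parts, t ^ 2 ≤ A.card ∧ tComplete G t v A}

/-- `Q` refines `P`: every part of `Q` is contained in some part of `P`. -/
def Refines [Fintype V] [DecidableEq V]
    (Q P : Finpartition (Finset.univ : Finset V)) : Prop :=
  ∀ A ∈ Q.parts, ∃ B ∈ P.parts, A ⊆ B

namespace Finpartition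

variable {α : Type*} [DecidableEq α] {s : Finset α} {P Q : Finpartition s}

lemma subset_of_le_of_mem (h : P ≤ Q) {A B : Finset α} (hA : A ∈ P.parts) (hB : B ∈ Q.parts)
    {x : α} (hxA : x ∈ A) (hxB : x ∈ B) : A ⊆ B := by
  obtain ⟨C, hC, hAC⟩ := h hA
  rwa [Q.eq_of_mem_parts hC hB (hAC hxA) hxB] at hAC

lemma part_mem_sdiff_of_mem_sdiff (h : P ≤ Q) {B : Finset α} (hB : B ∈ Q.parts \ P.parts)
    {x : α} (hx : x ∈ B) : P.part x ∈ P.parts \ Q.parts ∧ P.part x ⊆ B := by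
  obtain ⟨hBQ, hBP⟩ := mem_sdiff.1 hB
  have hxs : x ∈ s := Q.le hBQ hx
  have hpart : P.part x ∈ P.parts := P.part_mem.2 hxs
  refine ⟨mem_sdiff.2 ⟨hpart, fun hQ => hBP ?_⟩,
    subset_of_le_of_mem h hpart hBQ (P.mem_part hxs) hx⟩
  rwa [← Q.eq_of_mem_parts hQ hBQ (P.mem_part hxs) hx]

lemma two_le_card_filter_subset_of_mem_sdiff (h : P ≤ Q) {B : Finset α}
    (hB : B ∈ Q.parts \ P.parts) : 2 ≤ #{A ∈ P.parts \ Q.parts | A ⊆ B} := by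
  obtain ⟨x, hx⟩ := Q.nonempty_of_mem_parts (mem_sdiff.1 hB).1
  obtain ⟨hxnew, hxB⟩ := part_mem_sdiff_of_mem_sdiff h hB hx
  have hne : P.part x ≠ B := fun hEq => (mem_sdiff.1 hB).2 (hEq ▸ (mem_sdiff.1 hxnew).1)
  obtain ⟨y, hyB, hyx⟩ := exists_of_ssubset (hxB.ssubset_of_ne hne)
  obtain ⟨hynew, hyB'⟩ := part_mem_sdiff_of_mem_sdiff h hB hyB
  have hys : y ∈ s := Q.le (mem_sdiff.1 hB).1 hyB
  refine one_lt_card.2 ⟨P.part x, mem_filter.2 ⟨hxnew, hxB⟩, P.part y,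
    mem_filter.2 ⟨hynew, hyB'⟩, fun hEq => hyx ?_⟩
  exact hEq ▸ P.mem_part hys

theorem card_parts_sdiff_le (h : P ≤ Q) :
    #(P.parts \ Q.parts) ≤ 2 * (#P.parts - #Q.parts) := by
  have hsplit : #(Q.parts \ P.parts) * 2 ≤ #(P.parts \ Q.parts) * 1 := by
    refine card_mul_le_card_mul (fun B A : Finset α => A ⊆ B)
      (fun B hB => two_le_card_filter_subset_of_mem_sdiff h hB) fun A hA => ?_
    obtain ⟨x, hx⟩ := P.nonempty_of_mem_parts (mem_sdiff.1 hA).1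
    refine card_le_one.2 fun B hB B' hB' => ?_
    simp only [bipartiteBelow, mem_filter, mem_sdiff] at hB hB'
    exact Q.eq_of_mem_parts hB.1.1 hB'.1.1 (hB.2 hx) (hB'.2 hx)
  have hP := card_sdiff_add_card_inter P.parts Q.parts
  have hQ := card_sdiff_add_card_inter Q.parts P.parts
  rw [inter_comm] at hQ
  omega

end Finpartition

variable {G : SimpleGraph V} {t : ℕ}

lemma tComplete_iff_card_lt [DecidableRel G.Adj] {v : V} {C : Finset V} :
    tComplete G t v C ↔ #{u ∈ C | ¬G.Adj v u} < t := by
  rw [tComplete, ← Set.ncard_coe_finset]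
  congr!
  ext u
  simp

lemma card_lt_sq_of_forall_tComplete (hG : KttFree t G) {S C : Finset V} (hS : #S = t)
    (hSC : ∀ s ∈ S, tComplete G t s C) : #C < t ^ 2 := by
  classical
  by_contra! hC
  set N := S.biUnion fun s => {u ∈ C | ¬G.Adj s u}
  have hN : #N ≤ t * (t - 1) := by
    calc #N ≤ ∑ s ∈ S, #{u ∈ C | ¬G.Adj s u} := card_biUnion_le
      _ ≤ #S • (t - 1) := sum_le_card_nsmul _ _ _ fun s hs => by
          have := tComplete_iff_card_lt.1 (hSC s hs)
          omega
      _ = t * (t - 1) := by rw [hS, smul_eq_mul]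
  have hsq : t * (t - 1) + t = t ^ 2 := by
    cases t <;> simp [sq, Nat.mul_succ]
  have hCN : t ≤ #(C \ N) := by
    have := le_card_sdiff N C
    omega
  obtain ⟨B, hBC, hB⟩ := exists_subset_card_eq hCN
  have hadj : ∀ s ∈ S, ∀ b ∈ B, G.Adj s b := fun s hs b hb => by
    obtain ⟨hbC, hbN⟩ := mem_sdiff.1 (hBC hb)
    by_contra hsb
    exact hbN (mem_biUnion.2 ⟨s, hs, mem_filter.2 ⟨hbC, hsb⟩⟩)
  exact hG ⟨S, B, disjoint_left.2 fun s hs hsB => G.irrefl (hadj s hs s hsB), hS, hB, hadj⟩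

lemma ncard_setOf_tComplete_lt [Finite V] (hG : KttFree t G) {C : Finset V}
    (hC : t ^ 2 ≤ #C) : {v | tComplete G t v C}.ncard < t := by
  by_contra! h
  obtain ⟨S, hSC, hS⟩ := Set.exists_subset_card_eq h
  lift S to Finset V using S.toFinite
  rw [Set.ncard_coe_finset] at hS
  exact (card_lt_sq_of_forall_tComplete hG hS fun s hs => hSC hs).not_ge hC

def sparsifyPart (G : SimpleGraph V) (t : ℕ) (A : Finset V) : Set V :=
  if #A < t ^ 2 then A else {v | tComplete G t v A}

lemma ncard_sparsifyPart_lt [Finite V] (hG : KttFree t G) (A : Finset V) :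
    (sparsifyPart G t A).ncard < t ^ 2 := by
  unfold sparsifyPart
  split_ifs with hA
  · rwa [Set.ncard_coe_finset]
  · exact (ncard_setOf_tComplete_lt hG (not_lt.1 hA)).trans_le (Nat.le_self_pow two_ne_zero t)

section Sparsify

variable [Fintype V] [DecidableEq V]

lemma Refines.le {P Q : Finpartition (univ : Finset V)} (h : Refines Q P) : Q ≤ P :=
  fun A hA => h A hA

lemma mem_sparsify_iff {P : Finpartition (univ : Finset V)} {v : V} :
    v ∈ Sparsify G P t ↔ ∃ A ∈ P.parts, v ∈ sparsifyPart G t A := by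
  simp only [Sparsify, sparsifyPart, Set.mem_ofPred_eq]
  constructor
  · rintro (⟨A, hA, hvA, hsmall⟩ | ⟨A, hA, hlarge, hv⟩)
    · exact ⟨A, hA, by simpa [hsmall] using hvA⟩
    · exact ⟨A, hA, by simpa [not_lt.2 hlarge] using hv⟩
  · rintro ⟨A, hA, hv⟩
    split_ifs at hv with hsmall
    · exact Or.inl ⟨A, hA, hv, hsmall⟩
    · exact Or.inr ⟨A, hA, not_lt.1 hsmall, hv⟩

lemma sparsify_sdiff_subset (P P' : Finpartition (univ : Finset V)) :
    Sparsify G P' t \ Sparsify G P t ⊆ ⋃ A ∈ P'.parts \ P.parts, sparsifyPart G t A := by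
  rintro v ⟨hv', hv⟩
  obtain ⟨A, hA, hvA⟩ := mem_sparsify_iff.1 hv'
  exact Set.mem_biUnion (mem_sdiff.2 ⟨hA, fun hAP => hv (mem_sparsify_iff.2 ⟨A, hAP, hvA⟩)⟩) hvA

end Sparsify

/-- If `𝒫'` refines `𝒫` with `|𝒫'| = |𝒫| + 1`, then
`|Sparsify(G,𝒫',t) \ Sparsify(G,𝒫,t)| < 2t²`. -/
theorem stmt2 [Fintype V] [DecidableEq V] (t : ℕ) (G : SimpleGraph V)
    (hG : KttFree t G) (P P' : Finpartition (Finset.univ : Finset V))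
    (href : Refines P' P) (hcard : P'.parts.card = P.parts.card + 1) :
    (Sparsify G P' t \ Sparsify G P t).ncard < 2 * t ^ 2 := by
  have hnew : #(P'.parts \ P.parts) ≤ 2 := by
    simpa [hcard] using Finpartition.card_parts_sdiff_le href.le
  have ht : 1 ≤ t ^ 2 := Nat.one_le_pow _ _ hG.pos
  calc (Sparsify G P' t \ Sparsify G P t).ncard
      ≤ (⋃ A ∈ P'.parts \ P.parts, sparsifyPart G t A).ncard :=
        Set.ncard_le_ncard (sparsify_sdiff_subset P P') (Set.toFinite _)
    _ ≤ ∑ A ∈ P'.parts \ P.parts, (sparsifyPart G t A).ncard := set_ncard_biUnion_le _ _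
    _ ≤ #(P'.parts \ P.parts) • (t ^ 2 - 1) :=
        sum_le_card_nsmul _ _ _ fun A _ => Nat.le_sub_one_of_lt (ncard_sparsifyPart_lt hG A)
    _ ≤ 2 * (t ^ 2 - 1) := Nat.mul_le_mul_right _ hnew
    _ < 2 * t ^ 2 := by omega
end

section
/- Let G be a K_{t,t}-free simple graph, let 𝒫 be a partition of V(G), and let H be any 𝒫-flip of G. Then for every edge uv of G with both endpoints outside Sparsify(G, 𝒫, t), the distance between u and v in H is at most 3. -/
open Finset

variable {V : Type*}

/-- `H` is a `𝒫`-flip of `G`: the adjacency of a pair of distinct vertices is complemented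
iff the (unordered) pair of parts containing them is among the flipped pairs. -/
def IsPFlip [Fintype V] [DecidableEq V] (P : Finpartition (Finset.univ : Finset V))
    (G H : SimpleGraph V) : Prop :=
  ∃ f : Finset V → Finset V → Bool, (∀ A B, f A B = f B A) ∧
    ∀ u v : V, u ≠ v → ∀ A ∈ P.parts, ∀ B ∈ P.parts, u ∈ A → v ∈ B →
      (H.Adj u v ↔ Xor' (G.Adj u v) (f A B = true))

/-- `H` is a `k`-flip of `G`: a `𝒫`-flip for some partition with at most `k` parts. -/
def IsKFlip [Fintype V] [DecidableEq V] (k : ℕ) (G H : SimpleGraph V) : Prop :=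
  ∃ P : Finpartition (Finset.univ : Finset V), P.parts.card ≤ k ∧ IsPFlip P G H

/-!
Let `u ∈ A` and `v ∈ B` with `A, B ∈ 𝒫`. If the pair `(A, B)` is not flipped, `uv` is still an
edge of `H`. Otherwise both parts have at least `t²` vertices, so `u` has at least `t`
non-neighbours in `B` and `v` at least `t` non-neighbours in `A`. Since `G` is `K_{t,t}`-free,
some non-neighbour `x ∈ B` of `u` and some non-neighbour `y ∈ A` of `v` are non-adjacent.
All three non-edges `ux`, `xy`, `yv` run between `A` and `B`, so they become edges of `H`,
and `u x y v` is a walk of length at most `3` (some of its steps may be trivial).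
-/

theorem KttFree.exists_not_adj {t : ℕ} {G : SimpleGraph V} (hG : KttFree t G)
    {X Y : Finset V} (hX : t ≤ #X) (hY : t ≤ #Y) : ∃ x ∈ X, ∃ y ∈ Y, ¬ G.Adj x y := by
  by_contra! h
  obtain ⟨X', hX'X, hX'⟩ := exists_subset_card_eq hX
  obtain ⟨Y', hY'Y, hY'⟩ := exists_subset_card_eq hY
  have hdisj : Disjoint X' Y' :=
    disjoint_left.2 fun a haX haY => G.irrefl (h a (hX'X haX) a (hY'Y haY))
  exact hG ⟨X', Y', hdisj, hX', hY', fun a ha b hb => h a (hX'X ha) b (hY'Y hb)⟩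

theorem tComplete_iff_card_filter_lt {G : SimpleGraph V} [DecidableRel G.Adj] {t : ℕ} {v : V}
    {A : Finset V} : tComplete G t v A ↔ #{x ∈ A | ¬ G.Adj v x} < t := by
  rw [tComplete, ← Set.ncard_coe_finset, coe_filter]
  rfl

section Sparsify

variable [Fintype V] [DecidableEq V] {G : SimpleGraph V}
  {P : Finpartition (univ : Finset V)} {t : ℕ} {v : V} {A : Finset V}

theorem le_card_part_of_notMem_sparsify (hv : v ∉ Sparsify G P t) (hA : A ∈ P.parts)
    (hvA : v ∈ A) : t ^ 2 ≤ #A :=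
  not_lt.1 fun hlt => hv (Or.inl ⟨A, hA, hvA, hlt⟩)

theorem le_card_filter_not_adj_of_notMem_sparsify [DecidableRel G.Adj]
    (hv : v ∉ Sparsify G P t) (hA : A ∈ P.parts) (hcard : t ^ 2 ≤ #A) :
    t ≤ #{x ∈ A | ¬ G.Adj v x} :=
  not_lt.1 fun hlt => hv (Or.inr ⟨A, hA, hcard, tComplete_iff_card_filter_lt.2 hlt⟩)

end Sparsify

theorem IsPFlip.agree_or_complement [Fintype V] [DecidableEq V]
    {P : Finpartition (univ : Finset V)} {G H : SimpleGraph V} (hflip : IsPFlip P G H)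
    {A B : Finset V} (hA : A ∈ P.parts) (hB : B ∈ P.parts) :
    (∀ a ∈ A, ∀ b ∈ B, a ≠ b → (H.Adj a b ↔ G.Adj a b)) ∨
      ∀ a ∈ A, ∀ b ∈ B, a ≠ b → (H.Adj a b ↔ ¬ G.Adj a b) := by
  obtain ⟨f, -, hf⟩ := hflip
  cases hfAB : f A B
  · exact Or.inl fun a ha b hb hab =>
      ((hf a b hab A hA B hB ha hb).trans xor_def).trans (by simp [hfAB])
  · exact Or.inr fun a ha b hb hab =>
      ((hf a b hab A hA B hB ha hb).trans xor_def).trans (by simp [hfAB])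

theorem SimpleGraph.exists_walk_length_le_succ {H : SimpleGraph V} {a b c : V} {m : ℕ}
    (hab : ∃ p : H.Walk a b, p.length ≤ m) (hbc : H.Adj b c ∨ b = c) :
    ∃ p : H.Walk a c, p.length ≤ m + 1 := by
  obtain ⟨p, hp⟩ := hab
  rcases hbc with hbc | rfl
  · exact ⟨p.concat hbc, by simpa using hp⟩
  · exact ⟨p, by omega⟩

/-- For a `K_{t,t}`-free graph `G`, a partition `𝒫`, and any `𝒫`-flip `H`,
every edge `uv` of `G` with both endpoints outside `Sparsify(G,𝒫,t)` has distance at most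
`3` in `H`. -/
theorem stmt3 [Fintype V] [DecidableEq V] (t : ℕ) (G H : SimpleGraph V)
    (hG : KttFree t G) (P : Finpartition (Finset.univ : Finset V))
    (hflip : IsPFlip P G H) (u v : V) (huv : G.Adj u v)
    (hu : u ∉ Sparsify G P t) (hv : v ∉ Sparsify G P t) :
    ∃ p : H.Walk u v, p.length ≤ 3 := by
  classical
  obtain ⟨A, hA, huA⟩ := P.exists_mem (mem_univ u)
  obtain ⟨B, hB, hvB⟩ := P.exists_mem (mem_univ v)
  rcases hflip.agree_or_complement hA hB with hagree | hcompl
  · exact ⟨((hagree u huA v hvB huv.ne).2 huv).toWalk, by simp⟩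
  have step : ∀ a ∈ A, ∀ b ∈ B, ¬ G.Adj a b → H.Adj a b ∨ a = b := fun a ha b hb hab =>
    (eq_or_ne a b).symm.imp (fun hne => (hcompl a ha b hb hne).2 hab) id
  obtain ⟨x, hx, y, hy, hxy⟩ := hG.exists_not_adj
    (le_card_filter_not_adj_of_notMem_sparsify hu hB (le_card_part_of_notMem_sparsify hv hB hvB))
    (le_card_filter_not_adj_of_notMem_sparsify hv hA (le_card_part_of_notMem_sparsify hu hA huA))
  rw [mem_filter] at hx hy
  have hux := step u huA x hx.1 hx.2
  have hxy' := (step y hy.1 x hx.1 fun h => hxy h.symm).imp SimpleGraph.Adj.symm Eq.symm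
  have hyv := step y hy.1 v hvB fun h => hy.2 h.symm
  exact SimpleGraph.exists_walk_length_le_succ
    (SimpleGraph.exists_walk_length_le_succ
      (SimpleGraph.exists_walk_length_le_succ ⟨.nil, le_rfl⟩ hux) hxy') hyv
end

section
/- For every finite graph G, every vertex ordering ≤, every r ∈ ℕ with r ≥ 1, and every vertex v: sreach_r(v) ⊆ sep_r(v / S_{<v}) ∪ {v}, where S_{<v} is the set of vertices strictly smaller than v. Consequently scol_r(G) ≤ sw_r(G) + 1. -/
open Finset

variable {V : Type*}

/-- The `r`-separator of `v` in `S`: vertices of `S` reachable from `v` by a path of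
length at most `r` whose internal vertices avoid `S`. -/
def sepSet (G : SimpleGraph V) (r : ℕ) (v : V) (S : Set V) : Set V :=
  {u | u ∈ S ∧ ∃ p : G.Walk v u, p.length ≤ r ∧
        ∀ x ∈ p.support, x ≠ v → x ≠ u → x ∉ S}

/-- `S` is downward closed for the vertex ordering `ord`. -/
def DownClosed (ord : V → ℕ) (S : Set V) : Prop :=
  ∀ ⦃u v : V⦄, ord u ≤ ord v → v ∈ S → u ∈ S

/-- The ordering `ord` witnesses radius-`r` separation-width at most `k`. -/
def SWOrd (G : SimpleGraph V) (r : ℕ) (ord : V → ℕ) (k : ℕ) : Prop :=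
  ∀ S : Set V, DownClosed ord S → ∀ v ∉ S, (sepSet G r v S).ncard ≤ k

/-- The radius-`r` separation-width of `G`. -/
noncomputable def sepWidth [Fintype V] (G : SimpleGraph V) (r : ℕ) : ℕ :=
  sInf {k | ∃ ord : V → ℕ, Function.Injective ord ∧ SWOrd G r ord k}

/-- Vertices strongly `r`-reachable from `v` with respect to the ordering `ord`:
vertices `u ≤ v` joined to `v` by a path of length at most `r` all of whose internal
vertices are strictly greater than `v`. -/
def sreachSet (G : SimpleGraph V) (r : ℕ) (ord : V → ℕ) (v : V) : Set V :=
  {u | ord u ≤ ord v ∧ ∃ p : G.Walk v u, p.length ≤ r ∧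
        ∀ x ∈ p.support, x ≠ v → x ≠ u → ord v < ord x}

/-- The strong `r`-coloring number of `G`. -/
noncomputable def scol [Fintype V] (G : SimpleGraph V) (r : ℕ) : ℕ :=
  sInf {k | ∃ ord : V → ℕ, Function.Injective ord ∧
              ∀ v : V, (sreachSet G r ord v).ncard ≤ k}

section

variable (G : SimpleGraph V) (r : ℕ) {ord : V → ℕ}

lemma downClosed_lt (v : V) : DownClosed ord {u | ord u < ord v} :=
  fun _ _ hab hb => lt_of_le_of_lt hab hb

/-- A strong reachability path from `v` has all its internal vertices above `v`, so it avoids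
`{u | ord u < ord v}` and witnesses separation unless it ends at `v` itself. -/
lemma sreachSet_subset_sepSet_union (hord : Function.Injective ord) (v : V) :
    sreachSet G r ord v ⊆ sepSet G r v {u | ord u < ord v} ∪ {v} := by
  rintro u ⟨hle, p, hlen, hinternal⟩
  by_cases huv : u = v
  · exact Or.inr huv
  · refine Or.inl ⟨lt_of_le_of_ne hle (huv ∘ @hord u v), p, hlen, ?_⟩
    intro x hx hxv hxu hxS
    exact (hinternal x hx hxv hxu).not_gt hxS

lemma ncard_sreachSet_le_of_SWOrd [Finite V] (hord : Function.Injective ord) {k : ℕ}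
    (hsw : SWOrd G r ord k) (v : V) : (sreachSet G r ord v).ncard ≤ k + 1 :=
  calc (sreachSet G r ord v).ncard
      ≤ (sepSet G r v {u | ord u < ord v} ∪ {v}).ncard :=
        Set.ncard_le_ncard (sreachSet_subset_sepSet_union G r hord v) (Set.toFinite _)
    _ ≤ (sepSet G r v {u | ord u < ord v}).ncard + ({v} : Set V).ncard :=
        Set.ncard_union_le _ _
    _ ≤ k + 1 := by
        rw [Set.ncard_singleton]
        exact Nat.add_le_add_right (hsw _ (downClosed_lt v) v (lt_irrefl (ord v))) 1

lemma exists_SWOrd_card [Finite V] :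
    ∃ ord : V → ℕ, Function.Injective ord ∧ SWOrd G r ord (Nat.card V) := by
  obtain ⟨ord, hord⟩ := exists_injective_nat V
  exact ⟨ord, hord, fun S _ v _ => Set.ncard_le_card _⟩

end

theorem stmt8_general [Fintype V] (G : SimpleGraph V) (r : ℕ) :
    (∀ ord : V → ℕ, Function.Injective ord → ∀ v : V,
        sreachSet G r ord v ⊆ sepSet G r v {u | ord u < ord v} ∪ {v}) ∧
    scol G r ≤ sepWidth G r + 1 := by
  refine ⟨fun _ hord v => sreachSet_subset_sepSet_union G r hord v, ?_⟩
  obtain ⟨ord, hord, hsw⟩ := Nat.sInf_mem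
    (⟨Nat.card V, exists_SWOrd_card G r⟩ :
      {k | ∃ ord : V → ℕ, Function.Injective ord ∧ SWOrd G r ord k}.Nonempty)
  exact Nat.sInf_le ⟨ord, hord, ncard_sreachSet_le_of_SWOrd G r hord hsw⟩

/-- For every ordering and every vertex `v`,
`sreach_r(v) ⊆ sep_r(v / S_{<v}) ∪ {v}`; consequently `scol_r(G) ≤ sw_r(G) + 1`. -/
theorem stmt8 [Fintype V] (G : SimpleGraph V) (r : ℕ) (hr : 1 ≤ r) :
    (∀ ord : V → ℕ, Function.Injective ord → ∀ v : V,
        sreachSet G r ord v ⊆ sepSet G r v {u | ord u < ord v} ∪ {v}) ∧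
    scol G r ≤ sepWidth G r + 1 :=
  stmt8_general G r
end

section
/- For every finite graph G, the radius-∞ separation-width of G equals the tree-width of G: sw_∞(G) = tw(G). -/
/-!
Given an ordering of the vertices, let `sep v` be the set of vertices below `v` reachable from `v`
through vertices above `v`. If `u` and `w` lie in `sep v` and `u` is below `w`, then `u ∈ sep w`.
So if all `sep v` have at most `k` elements, the sets `{v} ∪ sep v` are the bags of a tree
decomposition of width `k` in which `v` hangs below the highest vertex of `sep v`.

Conversely, let `ℓ` be a leaf of a tree decomposition of width `k`, with neighbour `p`, and let
`X = bag ℓ \ bag p`. All neighbours of `X` lie in `bag ℓ`. Delete `X` and make `bag ℓ \ X` a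
clique; the decomposition without `ℓ` covers the new graph, which by induction has a good
ordering. Put `X` on top of it. For a down-set `S`, a walk of `G` that avoids `S` either stays in
`X`, and then everything it reaches lies in `bag ℓ`, or it can be shortcut through the clique.
-/

open Finset

variable {V : Type*}

/-- The `∞`-separator of `v` in `S`: vertices of `S` reachable from `v` by a path (of any
length) whose internal vertices avoid `S`. -/
def sepSetInf (G : SimpleGraph V) (v : V) (S : Set V) : Set V :=
  {u | u ∈ S ∧ ∃ p : G.Walk v u, ∀ x ∈ p.support, x ≠ v → x ≠ u → x ∉ S}

/-- The radius-`∞` separation-width of `G`. -/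
noncomputable def sepWidthInf [Fintype V] (G : SimpleGraph V) : ℕ :=
  sInf {k | ∃ ord : V → ℕ, Function.Injective ord ∧
              ∀ S : Set V, DownClosed ord S → ∀ v ∉ S, (sepSetInf G v S).ncard ≤ k}

/-- `G` has a tree decomposition of width at most `k`: a finite tree `T` with bags of
size at most `k + 1` covering all vertices and edges, such that for every vertex the set
of bags containing it induces a connected subtree. -/
def HasTreeDecompOfWidth (G : SimpleGraph V) (k : ℕ) : Prop :=
  ∃ (ι : Type) (_ : Fintype ι) (T : SimpleGraph ι) (_ : T.IsTree) (bag : ι → Set V),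
    (∀ i, (bag i).ncard ≤ k + 1) ∧
    (∀ v : V, ∃ i, v ∈ bag i) ∧
    (∀ u v : V, G.Adj u v → ∃ i, u ∈ bag i ∧ v ∈ bag i) ∧
    (∀ v : V, (T.induce {i | v ∈ bag i}).Connected)

/-- The tree-width of `G`. -/
noncomputable def treewidth [Fintype V] (G : SimpleGraph V) : ℕ :=
  sInf {k | HasTreeDecompOfWidth G k}

open SimpleGraph

namespace SimpleGraph

variable {W : Type*} {H : SimpleGraph W} {s : Set W}

lemma induce_connected_of_forall_exists_walk {a : W} (ha : a ∈ s)
    (h : ∀ b ∈ s, ∃ p : H.Walk b a, ∀ y ∈ p.support, y ∈ s) : (H.induce s).Connected := by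
  rw [connected_iff_exists_forall_reachable]
  refine ⟨⟨a, ha⟩, fun ⟨b, hb⟩ => ?_⟩
  obtain ⟨p, hp⟩ := h b hb
  exact (p.induce s hp).reachable.symm

lemma Connected.exists_walk_of_induce (hs : (H.induce s).Connected) {a b : W} (ha : a ∈ s)
    (hb : b ∈ s) : ∃ p : H.Walk a b, ∀ y ∈ p.support, y ∈ s := by
  obtain ⟨q⟩ := hs.preconnected ⟨a, ha⟩ ⟨b, hb⟩
  refine ⟨q.map (Embedding.induce s).toHom, fun y hy => ?_⟩
  obtain ⟨y, -, rfl⟩ := List.mem_map.1 (Walk.support_map _ q ▸ hy)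
  exact y.2

lemma Connected.induce_preimage_compl_singleton {ℓ : W} (hℓ : (H.neighborSet ℓ).Subsingleton)
    (hs : (H.induce s).Connected) {a : W} (ha : a ∈ s) (haℓ : a ≠ ℓ) :
    ((H.induce {ℓ}ᶜ).induce (Subtype.val ⁻¹' s)).Connected := by
  classical
  refine induce_connected_of_forall_exists_walk (a := ⟨a, haℓ⟩) ha fun b hb => ?_
  obtain ⟨p, hp⟩ := hs.exists_walk_of_induce hb ha
  have hℓp : ∀ y ∈ p.bypass.support, y ∈ ({ℓ}ᶜ : Set W) := by
    rintro y hy rfl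
    exact p.bypass_isPath.isTrail.not_mem_support_of_subsingleton_neighborSet
      (Ne.symm b.2) haℓ.symm hℓ hy
  refine ⟨p.bypass.induce _ hℓp, fun y hy => ?_⟩
  rw [Walk.support_induce, List.mem_attachWith] at hy
  exact hp _ (p.support_bypass_subset_support hy)

end SimpleGraph

section parentGraph

variable {ι : Type*}

def parentGraph (par : ι → ι) : SimpleGraph ι := SimpleGraph.fromRel fun i j => par i = j

variable {par : ι → ι} {rank : ι → ℕ}

lemma parentGraph_adj {i j : ι} :
    (parentGraph par).Adj i j ↔ i ≠ j ∧ (par i = j ∨ par j = i) :=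
  fromRel_adj _ i j

lemma induce_parentGraph_connected {s : Set ι} {a : ι} (ha : a ∈ s)
    (hs : ∀ i ∈ s, i ≠ a → par i ∈ s ∧ rank (par i) < rank i) :
    ((parentGraph par).induce s).Connected := by
  refine induce_connected_of_forall_exists_walk ha fun i hi => ?_
  induction hn : rank i using Nat.strong_induction_on generalizing i with
  | _ n ih =>
  by_cases hia : i = a
  · subst hia
    exact ⟨Walk.nil, by simpa⟩
  obtain ⟨hpar, hlt⟩ := hs i hi hia
  obtain ⟨p, hp⟩ := ih _ (hn ▸ hlt) _ hpar rfl
  have hadj : (parentGraph par).Adj i (par i) :=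
    parentGraph_adj.2 ⟨fun h => hlt.ne (congrArg rank h).symm, Or.inl rfl⟩
  refine ⟨Walk.cons hadj p, fun y hy => ?_⟩
  rcases List.mem_cons.1 (Walk.support_cons hadj p ▸ hy) with rfl | hy
  exacts [hi, hp y hy]

variable {r : ι}

lemma eq_of_parentGraph_adj_of_rank_le (hroot : par r = r)
    (hrank : ∀ i ≠ r, rank (par i) < rank i) {i j : ι} (hij : (parentGraph par).Adj i j)
    (hji : rank j ≤ rank i) : j = par i := by
  obtain ⟨hne, h | h⟩ := parentGraph_adj.1 hij
  · exact h.symm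
  · have hjr : j ≠ r := by
      rintro rfl
      exact hne (h ▸ hroot)
    have := hrank j hjr
    rw [h] at this
    omega

lemma parentGraph_isTree (hroot : par r = r) (hrank : ∀ i ≠ r, rank (par i) < rank i) :
    (parentGraph par).IsTree := by
  classical
  refine (isTree_iff _).2 ⟨(induceUnivIso _).connected_iff.1 ?_, fun v c hc => ?_⟩
  · exact induce_parentGraph_connected (Set.mem_univ r) fun i _ hi => ⟨trivial, hrank i hi⟩
  -- a vertex of maximal rank on a cycle would have both of its cycle neighbours as parent
  obtain ⟨i, hi, hmax⟩ := c.support.toFinset.exists_max_image rank ⟨v, by simp⟩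
  rw [List.mem_toFinset] at hi
  have hc' := hc.rotate hi
  have hle : ∀ y ∈ (c.rotate i hi).support, rank y ≤ rank i := fun y hy =>
    hmax y (by simpa using hy)
  have hnil := hc'.not_nil
  exact hc'.snd_ne_penultimate <|
    (eq_of_parentGraph_adj_of_rank_le hroot hrank (Walk.adj_snd hnil)
      (hle _ (Walk.getVert_mem_support _ _))).trans
    (eq_of_parentGraph_adj_of_rank_le hroot hrank (Walk.adj_penultimate hnil).symm
      (hle _ (Walk.getVert_mem_support _ _))).symm

end parentGraph

/-- `ord` is an injective vertex ordering witnessing `sw_∞(G) ≤ k`. -/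
def IsSeparationOrder (G : SimpleGraph V) (k : ℕ) (ord : V → ℕ) : Prop :=
  Function.Injective ord ∧
    ∀ S : Set V, DownClosed ord S → ∀ v ∉ S, (sepSetInf G v S).ncard ≤ k

/-- A tree decomposition of width at most `k`, unbundled from `HasTreeDecompOfWidth` and with an
index type in an arbitrary universe. -/
structure TreeDecomposition (G : SimpleGraph V) (ι : Type*) (k : ℕ) where
  tree : SimpleGraph ι
  isTree : tree.IsTree
  bag : ι → Set V
  ncard_bag_le : ∀ i, (bag i).ncard ≤ k + 1
  exists_mem_bag : ∀ v, ∃ i, v ∈ bag i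
  exists_mem_bag_of_adj : ∀ u v, G.Adj u v → ∃ i, u ∈ bag i ∧ v ∈ bag i
  induce_connected : ∀ v, (tree.induce {i | v ∈ bag i}).Connected

theorem TreeDecomposition.hasTreeDecompOfWidth {G : SimpleGraph V} {ι : Type*} [Finite ι]
    {k : ℕ} (D : TreeDecomposition G ι k) : HasTreeDecompOfWidth G k := by
  let e := (Finite.equivFin ι).symm
  refine ⟨_, inferInstance, D.tree.comap e, (Iso.comap e D.tree).isTree_iff.2 D.isTree,
    D.bag ∘ e, fun i => D.ncard_bag_le _, fun v => ?_, fun u v huv => ?_, fun v => ?_⟩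
  · obtain ⟨i, hi⟩ := D.exists_mem_bag v
    exact ⟨e.symm i, by simpa using hi⟩
  · obtain ⟨i, hu, hv⟩ := D.exists_mem_bag_of_adj u v huv
    exact ⟨e.symm i, by simpa using hu, by simpa using hv⟩
  · refine (D.induce_connected v).map (induceHom (Iso.comap e D.tree).symm.toHom ?_) ?_
    · intro i hi
      simpa using hi
    · rintro ⟨j, hj⟩
      exact ⟨⟨e j, hj⟩, Subtype.ext (e.symm_apply_apply j)⟩

section sepSetInf

variable {G : SimpleGraph V} {S : Set V} {u v : V}

lemma mem_sepSetInf_iff (hv : v ∉ S) :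
    u ∈ sepSetInf G v S ↔ u ∈ S ∧ ∃ p : G.Walk v u, ∀ y ∈ p.support, y ∉ S ∨ y = u := by
  refine and_congr_right fun _ => exists_congr fun p => forall₂_congr fun y _ => ?_
  by_cases hyv : y = v
  · subst hyv
    simp [hv]
  · by_cases hyu : y = u <;> simp [hyv, hyu]

lemma exists_adj_of_mem_sepSetInf (hv : v ∉ S) (hu : u ∈ sepSetInf G v S) :
    ∃ x, G.Adj x u ∧ ∃ p : G.Walk v x, ∀ y ∈ p.support, y ∉ S := by
  obtain ⟨huS, p, hp⟩ := (mem_sepSetInf_iff hv).1 hu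
  clear hu
  induction p with
  | nil => exact absurd huS hv
  | @cons v w u hvw p ih =>
    by_cases hwu : w = u
    · subst hwu
      exact ⟨v, hvw, Walk.nil, by simpa⟩
    have hw : w ∉ S := (hp w (by simp)).resolve_right hwu
    obtain ⟨x, hxu, q, hq⟩ := ih hw huS fun y hy => hp y (List.mem_cons_of_mem _ hy)
    exact ⟨x, hxu, Walk.cons hvw q, by simpa [hv] using hq⟩

lemma sepSetInf_subset_of_walk {z : V} (p : G.Walk v z) (hp : ∀ y ∈ p.support, y ∉ S) :
    sepSetInf G v S ⊆ sepSetInf G z S := by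
  intro u hu
  obtain ⟨huS, q, hq⟩ := (mem_sepSetInf_iff (hp v p.start_mem_support)).1 hu
  refine (mem_sepSetInf_iff (hp z p.end_mem_support)).2 ⟨huS, p.reverse.append q, fun y hy => ?_⟩
  rw [Walk.mem_support_append_iff, Walk.support_reverse, List.mem_reverse] at hy
  rcases hy with hy | hy
  exacts [Or.inl (hp y hy), hq y hy]

lemma ncard_sepSetInf_add_one_le [Finite V] {B : Set V} (hv : v ∉ S) (hvB : v ∈ B)
    (hB : sepSetInf G v S ⊆ B) : (sepSetInf G v S).ncard + 1 ≤ B.ncard := by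
  have hsub : sepSetInf G v S ⊆ B \ {v} := fun u hu =>
    ⟨hB hu, fun huv => hv (Set.mem_singleton_iff.1 huv ▸ hu.1)⟩
  rw [← Set.ncard_sdiff_singleton_add_one hvB]
  exact Nat.add_le_add_right (Set.ncard_le_ncard hsub) 1

lemma IsSeparationOrder.of_ncard_le [Finite V] {k : ℕ} {ord : V → ℕ} (hV : Nat.card V ≤ k + 1)
    (hord : Function.Injective ord) : IsSeparationOrder G k ord := by
  refine ⟨hord, fun S _ v hv => ?_⟩
  have := ncard_sepSetInf_add_one_le (G := G) hv (Set.mem_univ v) (Set.subset_univ _)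
  rw [Set.ncard_univ] at this
  omega

end sepSetInf

section ofSeparationOrder

variable {G : SimpleGraph V} {ord : V → ℕ}

variable (G ord) in
/-- Together with `v`, the bag of `v` in the tree decomposition built from `ord`. -/
def sepBelow (v : V) : Set V := sepSetInf G v {u | ord u < ord v}

lemma mem_sepBelow_of_adj {a b : V} (hab : G.Adj a b) (hlt : ord b < ord a) :
    b ∈ sepBelow G ord a :=
  ⟨hlt, hab.toWalk, by simp +contextual⟩

lemma mem_sepBelow_of_mem_sepBelow {u v w : V} (hu : u ∈ sepBelow G ord v)
    (hw : w ∈ sepBelow G ord v) (huw : ord u < ord w) : u ∈ sepBelow G ord w := by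
  obtain ⟨-, p, hp⟩ := hu
  obtain ⟨hwv, q, hq⟩ := hw
  refine ⟨huw, q.reverse.append p, fun y hy hyw hyu => ?_⟩
  simp only [Set.mem_ofPred_eq, not_lt] at hp hq hwv ⊢
  by_cases hyv : y = v
  · exact hyv ▸ hwv.le
  rw [Walk.mem_support_append_iff, Walk.support_reverse, List.mem_reverse] at hy
  rcases hy with hy | hy
  exacts [(hq y hy hyv hyw).trans' hwv.le, (hp y hy hyv hyu).trans' hwv.le]

/-- Each vertex with a nonempty `sepBelow` gets as parent the highest vertex of it. -/
lemma exists_sepBelow_parent [Finite V] (hord : Function.Injective ord) :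
    ∃ par : V → Option V, (∀ v w, par v = some w → w ∈ sepBelow G ord v) ∧
      ∀ v, ∀ u ∈ sepBelow G ord v, ∃ w, par v = some w ∧ (u = w ∨ u ∈ sepBelow G ord w) := by
  have : ∀ v, ∃ o : Option V, (∀ w, o = some w → w ∈ sepBelow G ord v) ∧
      ∀ u ∈ sepBelow G ord v, ∃ w, o = some w ∧ ord u ≤ ord w := by
    intro v
    rcases (sepBelow G ord v).eq_empty_or_nonempty with h | h
    · exact ⟨none, by simp [h]⟩
    obtain ⟨w, hw, hmax⟩ := Set.exists_max_image _ ord (Set.toFinite _) h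
    exact ⟨some w, by simpa using hw, fun u hu => ⟨w, rfl, hmax u hu⟩⟩
  choose par hpar hmax using this
  refine ⟨par, hpar, fun v u hu => ?_⟩
  obtain ⟨w, hw, huw⟩ := hmax v u hu
  refine ⟨w, hw, ?_⟩
  rcases huw.lt_or_eq with huw | huw
  · exact Or.inr (mem_sepBelow_of_mem_sepBelow hu (hpar v w hw) huw)
  · exact Or.inl (hord huw)

/-- The tree is rooted at `none`; `some v` carries the bag `{v} ∪ sepBelow v`. -/
theorem IsSeparationOrder.nonempty_treeDecomposition [Finite V] {k : ℕ}
    (h : IsSeparationOrder G k ord) : Nonempty (TreeDecomposition G (Option V) k) := by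
  obtain ⟨par, hpar, hparent⟩ := exists_sepBelow_parent (G := G) h.1
  let bag : Option V → Set V := fun x => x.elim ∅ fun v => insert v (sepBelow G ord v)
  let rank : Option V → ℕ := fun x => x.elim 0 fun v => ord v + 1
  have hrank : ∀ x, x ≠ none → rank (x.bind par) < rank x := by
    rintro (_ | v) hx
    · exact absurd rfl hx
    cases hv : par v with
    | none => simp [rank, hv]
    | some w => simpa [rank, hv] using (hpar v w hv).1
  refine ⟨⟨parentGraph (·.bind par), parentGraph_isTree rfl hrank, bag, ?_, fun v => ⟨some v, ?_⟩,
    fun u v huv => ?_, fun u => induce_parentGraph_connected (rank := rank) (a := some u) ?_ ?_⟩⟩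
  · rintro (_ | v)
    · simp [bag]
    · have := h.2 {u | ord u < ord v} (fun _ _ hab hb => hab.trans_lt hb) v (lt_irrefl (ord v))
      exact (Set.ncard_insert_le _ _).trans (Nat.add_le_add_right this 1)
  · exact Set.mem_insert v _
  · rcases lt_trichotomy (ord u) (ord v) with huv' | huv' | huv'
    · exact ⟨some v, Set.mem_insert_of_mem _ (mem_sepBelow_of_adj huv.symm huv'),
        Set.mem_insert v _⟩
    · exact absurd (h.1 huv') huv.ne
    · exact ⟨some u, Set.mem_insert u _, Set.mem_insert_of_mem _ (mem_sepBelow_of_adj huv huv')⟩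
  · exact Set.mem_insert u _
  · rintro (_ | v) hv hvu
    · simp [bag] at hv
    have hu : u ∈ sepBelow G ord v :=
      (Set.mem_insert_iff.1 hv).resolve_left fun h => hvu (congrArg some h.symm)
    obtain ⟨w, hw, huw⟩ := hparent v u hu
    refine ⟨?_, hrank _ (Option.some_ne_none v)⟩
    simp only [Set.mem_ofPred_eq, Option.bind_some, hw]
    rcases huw with rfl | huw
    exacts [Set.mem_insert _ _, Set.mem_insert_of_mem _ huw]

end ofSeparationOrder

section eliminate

def SimpleGraph.eliminate (G : SimpleGraph V) (X B : Set V) : SimpleGraph ↥Xᶜ where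
  Adj a b := a ≠ b ∧ (G.Adj a b ∨ ((a : V) ∈ B ∧ (b : V) ∈ B))
  symm := ⟨fun _ _ ⟨hne, h⟩ => ⟨hne.symm, h.imp (·.symm) And.symm⟩⟩
  loopless := ⟨fun _ h => h.1 rfl⟩

variable {G : SimpleGraph V} {X B S : Set V}

/-- A walk of `G` shortcuts through the clique on `B`. While the walk is inside `X`, the
shortcut may start at any vertex of `B`, since the walk leaves `X` through `B`. -/
lemma exists_walk_eliminate (hX : ∀ ⦃a x⦄, G.Adj a x → x ∈ X → a ∈ B) {a b : V}
    (p : G.Walk a b) (hp : ∀ y ∈ p.support, y ∉ S ∨ y = b) (hb : b ∉ X) (c : ↥Xᶜ)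
    (hc : (c : V) ∉ S ∨ (c : V) = b) (hca : (c : V) = a ∨ a ∈ X ∧ (c : V) ∈ B) :
    ∃ q : (G.eliminate X B).Walk c ⟨b, hb⟩, ∀ y ∈ q.support, (y : V) ∉ S ∨ (y : V) = b := by
  induction p generalizing c with
  | nil =>
    rcases hca with hca | ⟨ha, -⟩
    · obtain rfl : c = ⟨_, hb⟩ := Subtype.ext hca
      exact ⟨Walk.nil, by simp⟩
    · exact absurd ha hb
  | @cons a a' b h p ih =>
    have hp' : ∀ y ∈ p.support, y ∉ S ∨ y = b := fun y hy => hp y (List.mem_cons_of_mem _ hy)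
    by_cases ha' : a' ∈ X
    · refine ih hp' hb c hc (Or.inr ⟨ha', ?_⟩)
      rcases hca with hca | ⟨-, hcB⟩
      exacts [hca ▸ hX h ha', hcB]
    obtain ⟨q, hq⟩ := ih hp' hb ⟨a', ha'⟩ (hp' a' p.start_mem_support) (Or.inl rfl)
    by_cases hca' : c = ⟨a', ha'⟩
    · subst hca'
      exact ⟨q, hq⟩
    have hadj : (G.eliminate X B).Adj c ⟨a', ha'⟩ := by
      refine ⟨hca', ?_⟩
      rcases hca with hca | ⟨haX, hcB⟩
      exacts [Or.inl (hca ▸ h), Or.inr ⟨hcB, hX h.symm haX⟩]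
    refine ⟨Walk.cons hadj q, fun y hy => ?_⟩
    rcases List.mem_cons.1 hy with rfl | hy
    exacts [hc, hq y hy]

lemma sepSetInf_subset_image_eliminate (hX : ∀ ⦃a x⦄, G.Adj a x → x ∈ X → a ∈ B)
    (hSX : ∀ x ∈ X, x ∉ S) {a : V} (ha : a ∉ X) (haS : a ∉ S) :
    sepSetInf G a S ⊆
      Subtype.val '' sepSetInf (G.eliminate X B) ⟨a, ha⟩ (Subtype.val ⁻¹' S) := by
  intro u hu
  obtain ⟨huS, p, hp⟩ := (mem_sepSetInf_iff haS).1 hu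
  have huX : u ∉ X := fun h => hSX u h huS
  obtain ⟨q, hq⟩ := exists_walk_eliminate hX p hp huX ⟨a, ha⟩ (Or.inl haS) (Or.inl rfl)
  refine ⟨⟨u, huX⟩, (mem_sepSetInf_iff (G := G.eliminate X B) (v := ⟨a, ha⟩) haS).2
    ⟨huS, q, fun y hy => (hq y hy).imp id Subtype.ext⟩, rfl⟩

lemma sepSetInf_subset_or_exists_walk (hX : ∀ ⦃a x⦄, G.Adj a x → x ∈ X → a ∈ B) {v : V}
    (hv : v ∉ S) :
    (v ∈ X ∧ sepSetInf G v S ⊆ B) ∨ ∃ x ∉ X, ∃ p : G.Walk v x, ∀ y ∈ p.support, y ∉ S := by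
  by_cases hvX : v ∈ X
  · by_cases hsub : sepSetInf G v S ⊆ B
    · exact Or.inl ⟨hvX, hsub⟩
    obtain ⟨u, hu, huB⟩ := Set.not_subset.1 hsub
    obtain ⟨x, hxu, p, hp⟩ := exists_adj_of_mem_sepSetInf hv hu
    exact Or.inr ⟨x, fun hx => huB (hX hxu.symm hx), p, hp⟩
  · exact Or.inr ⟨v, hvX, Walk.nil, by simpa⟩

lemma exists_injective_extend [Finite V] {ord' : ↥Xᶜ → ℕ} (hord' : Function.Injective ord') :
    ∃ ord : V → ℕ, Function.Injective ord ∧ (∀ y : ↥Xᶜ, ord y = ord' y) ∧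
      ∀ x ∈ X, ∀ y ∉ X, ord y < ord x := by
  classical
  obtain ⟨M, hM⟩ := (Set.finite_range ord').bddAbove
  let e : V → ℕ := fun v => Finite.equivFin V v
  have he : Function.Injective e := Fin.val_injective.comp (Finite.equivFin V).injective
  have hlt : ∀ y (hy : y ∉ X) x, ord' ⟨y, hy⟩ < M + 1 + e x := fun y hy x => by
    have := hM ⟨⟨y, hy⟩, rfl⟩
    omega
  refine ⟨fun v => if h : v ∈ X then M + 1 + e v else ord' ⟨v, h⟩,
    Function.Injective.dite _ (fun a b hab => Subtype.ext (he (Nat.add_left_cancel hab)))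
      (fun a b hab => Subtype.ext (congrArg Subtype.val (hord' hab)))
      fun {x y} {_ hy} => (hlt y hy x).ne',
    fun y => dif_neg y.2, fun x hx y hy => ?_⟩
  simp only [dif_pos hx, dif_neg hy]
  exact hlt y hy x

theorem IsSeparationOrder.of_eliminate [Finite V] {k : ℕ}
    (hX : ∀ ⦃a x⦄, G.Adj a x → x ∈ X → a ∈ B) (hXB : X ⊆ B) (hB : B.ncard ≤ k + 1)
    {ord' : ↥Xᶜ → ℕ} (h' : IsSeparationOrder (G.eliminate X B) k ord') :
    ∃ ord, IsSeparationOrder G k ord := by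
  obtain ⟨ord, hinj, hord, htop⟩ := exists_injective_extend h'.1
  refine ⟨ord, hinj, fun S hS v hv => ?_⟩
  have hbag : v ∈ X → sepSetInf G v S ⊆ B → (sepSetInf G v S).ncard ≤ k := fun hvX hsub => by
    have := ncard_sepSetInf_add_one_le hv (hXB hvX) hsub
    omega
  by_cases hSX : ∀ x ∈ X, x ∉ S
  · rcases sepSetInf_subset_or_exists_walk hX hv with ⟨hvX, hsub⟩ | ⟨x, hxX, p, hp⟩
    · exact hbag hvX hsub
    have hxS := hp x p.end_mem_support
    have hS' : DownClosed ord' (Subtype.val ⁻¹' S) := fun a b hab hb =>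
      hS (by rwa [hord, hord]) hb
    calc (sepSetInf G v S).ncard
        ≤ (Subtype.val '' sepSetInf (G.eliminate X B) ⟨x, hxX⟩ (Subtype.val ⁻¹' S)).ncard :=
          Set.ncard_le_ncard ((sepSetInf_subset_of_walk p hp).trans
            (sepSetInf_subset_image_eliminate hX hSX hxX hxS))
      _ = (sepSetInf (G.eliminate X B) ⟨x, hxX⟩ (Subtype.val ⁻¹' S)).ncard :=
          Set.ncard_image_of_injective _ Subtype.val_injective
      _ ≤ k := h'.2 _ hS' _ hxS
  · -- `X` lies above the rest of the order, so `S` contains everything outside `X`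
    push Not at hSX
    obtain ⟨x₀, hx₀X, hx₀S⟩ := hSX
    rcases sepSetInf_subset_or_exists_walk hX hv with ⟨hvX, hsub⟩ | ⟨x, hxX, p, hp⟩
    · exact hbag hvX hsub
    · exact absurd (hS (htop x₀ hx₀X x hxX).le hx₀S) (hp x p.end_mem_support)

end eliminate

namespace TreeDecomposition

variable {G : SimpleGraph V} {ι : Type*} {k : ℕ} (D : TreeDecomposition G ι k) {ℓ p : ι}

lemma eq_of_mem_bag_sdiff (hleaf : ∀ j, D.tree.Adj ℓ j → j = p) {x : V}
    (hx : x ∈ D.bag ℓ \ D.bag p) {i : ι} (hi : x ∈ D.bag i) : i = ℓ := by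
  by_contra hiℓ
  obtain ⟨w, hw⟩ := (D.induce_connected x).exists_walk_of_induce hi hx.1
  have hnil : ¬w.Nil := Walk.not_nil_of_ne hiℓ
  have := hw w.penultimate (w.getVert_mem_support _)
  rw [hleaf _ (Walk.adj_penultimate hnil).symm] at this
  exact hx.2 this

lemma mem_bag_of_adj_of_mem_bag_sdiff (hleaf : ∀ j, D.tree.Adj ℓ j → j = p) ⦃a x : V⦄
    (hax : G.Adj a x) (hx : x ∈ D.bag ℓ \ D.bag p) : a ∈ D.bag ℓ := by
  obtain ⟨i, hai, hxi⟩ := D.exists_mem_bag_of_adj a x hax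
  rwa [← D.eq_of_mem_bag_sdiff hleaf hx hxi]

lemma exists_ne_mem_bag (hℓp : D.tree.Adj ℓ p) {a b : V} (ha : a ∉ D.bag ℓ \ D.bag p)
    (hb : b ∉ D.bag ℓ \ D.bag p) {i : ι} (hai : a ∈ D.bag i) (hbi : b ∈ D.bag i) :
    ∃ j : ↥({ℓ}ᶜ : Set ι), a ∈ D.bag j ∧ b ∈ D.bag j := by
  by_cases hiℓ : i = ℓ
  · subst hiℓ
    exact ⟨⟨p, hℓp.ne'⟩, not_not.1 fun h => ha ⟨hai, h⟩, not_not.1 fun h => hb ⟨hbi, h⟩⟩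
  · exact ⟨⟨i, hiℓ⟩, hai, hbi⟩

/-- The part of `bag ℓ` that survives the elimination lies in `bag p`, so the clique it
becomes is still covered. -/
def eraseLeaf [Finite V] (hℓp : D.tree.Adj ℓ p) (hleaf : ∀ j, D.tree.Adj ℓ j → j = p) :
    TreeDecomposition (G.eliminate (D.bag ℓ \ D.bag p) (D.bag ℓ)) ↥({ℓ}ᶜ : Set ι) k where
  tree := D.tree.induce {ℓ}ᶜ
  isTree := by
    refine (isTree_iff _).2 ⟨(connected_iff _).2 ⟨?_, ⟨⟨p, hℓp.ne'⟩⟩⟩, D.isTree.isAcyclic.induce _⟩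
    exact D.isTree.connected.preconnected.induce_of_degree_eq_one fun i hi =>
      (Set.notMem_compl_iff.1 hi) ▸ Set.subsingleton_of_forall_eq p hleaf
  bag j := Subtype.val ⁻¹' D.bag j
  ncard_bag_le j := by
    rw [← Set.ncard_image_of_injective _ Subtype.val_injective]
    exact (Set.ncard_le_ncard (Set.image_preimage_subset _ _)).trans (D.ncard_bag_le j)
  exists_mem_bag v := by
    obtain ⟨i, hi⟩ := D.exists_mem_bag v
    obtain ⟨j, hj, -⟩ := D.exists_ne_mem_bag hℓp v.2 v.2 hi hi
    exact ⟨j, hj⟩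
  exists_mem_bag_of_adj u v huv := by
    rcases huv.2 with huv | ⟨hu, hv⟩
    · obtain ⟨i, hu, hv⟩ := D.exists_mem_bag_of_adj u v huv
      exact D.exists_ne_mem_bag hℓp u.2 v.2 hu hv
    · exact D.exists_ne_mem_bag hℓp u.2 v.2 hu hv
  induce_connected v := by
    obtain ⟨i, hi⟩ := D.exists_mem_bag v
    obtain ⟨j, hj, -⟩ := D.exists_ne_mem_bag hℓp v.2 v.2 hi hi
    exact (D.induce_connected v).induce_preimage_compl_singleton
      (Set.subsingleton_of_forall_eq p hleaf) hj j.2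

theorem exists_isSeparationOrder [Finite V] [Finite ι] (D : TreeDecomposition G ι k) :
    ∃ ord, IsSeparationOrder G k ord := by
  induction hn : Nat.card ι using Nat.strong_induction_on generalizing ι V with
  | _ n ih =>
  rcases subsingleton_or_nontrivial ι with hι | hι
  · obtain ⟨i₀⟩ := D.isTree.connected.nonempty
    have hV : Nat.card V ≤ k + 1 := by
      rw [← Set.ncard_univ]
      refine (Set.ncard_le_ncard fun v _ => ?_).trans (D.ncard_bag_le i₀)
      obtain ⟨i, hi⟩ := D.exists_mem_bag v
      rwa [Subsingleton.elim i i₀] at hi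
    exact ⟨_, IsSeparationOrder.of_ncard_le hV
      (Fin.val_injective.comp (Finite.equivFin V).injective)⟩
  classical
  have := Fintype.ofFinite ι
  obtain ⟨ℓ, hdeg⟩ := D.isTree.exists_vert_degree_one_of_nontrivial
  obtain ⟨p, hℓp, hleaf⟩ := degree_eq_one_iff_existsUnique_adj.1 hdeg
  obtain ⟨ord', h'⟩ := ih _ (hn ▸ Finite.card_subtype_lt (x := ℓ) (by simp))
    (D.eraseLeaf hℓp hleaf) rfl
  exact h'.of_eliminate (D.mem_bag_of_adj_of_mem_bag_sdiff hleaf) Set.sdiff_subset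
    (D.ncard_bag_le ℓ)

end TreeDecomposition

/-- the radius-`∞` separation-width equals the tree-width. -/
theorem stmt12 [Fintype V] (G : SimpleGraph V) :
    sepWidthInf G = treewidth G := by
  have hwidths : {k | ∃ ord, IsSeparationOrder G k ord} = {k | HasTreeDecompOfWidth G k} := by
    ext k
    constructor
    · rintro ⟨ord, hord⟩
      obtain ⟨D⟩ := hord.nonempty_treeDecomposition
      exact D.hasTreeDecompOfWidth
    · rintro ⟨ι, _, T, hT, bag, hbag, hcover, hedge, hconn⟩
      exact (TreeDecomposition.mk T hT bag hbag hcover hedge hconn).exists_isSeparationOrder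
  exact congrArg sInf hwidths
end

section
/- Let G be a K_{t,t}-free graph, let u, v, w be vertices with uv ∈ E(G) and u, v in parts P, Q of a partition 𝒫 of V(G), and let H be a 𝒫-flip of G in which P and Q are flipped. If u is not t-complete to Q, v is not t-complete to P, and |P|, |Q| ≥ t², then dist_H(u, v) ≤ 3. -/
open Finset

variable {V : Type*}

/-!
The non-neighbours `Q'` of `u` in `Q` and `P'` of `v` in `P` both have at least `t` elements,
and since the pair `(P, Q)` is flipped, every non-edge of `G` between `P` and `Q` is an edge of
`H`. So `u` is within distance one of all of `Q'`, `v` of all of `P'`, and any `x ∈ Q'` and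
`y ∈ P'` that are non-adjacent in `G` are within distance one in `H`. Either `Q'` and `P'` meet,
giving a path of length two, or they are disjoint and `K_{t,t}`-freeness yields such a
non-adjacent pair, giving a path of length three.
-/

lemma SimpleGraph.exists_walk_length_le_of_edist_le {G : SimpleGraph V} {u v : V} {n : ℕ}
    (h : G.edist u v ≤ n) : ∃ p : G.Walk u v, p.length ≤ n := by
  have hreach : G.Reachable u v :=
    SimpleGraph.reachable_of_edist_ne_top (ne_top_of_le_ne_top (ENat.natCast_ne_top n) h)
  obtain ⟨p, hp⟩ := hreach.exists_walk_length_eq_edist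
  exact ⟨p, by exact_mod_cast hp ▸ h⟩

lemma KttFree.exists_not_adj_s13 {t : ℕ} {G : SimpleGraph V} (hG : KttFree t G) {A B : Finset V}
    (hAB : Disjoint A B) (hA : t ≤ #A) (hB : t ≤ #B) : ∃ a ∈ A, ∃ b ∈ B, ¬ G.Adj a b := by
  obtain ⟨A', hA', hA'card⟩ := exists_subset_card_eq hA
  obtain ⟨B', hB', hB'card⟩ := exists_subset_card_eq hB
  by_contra! hall
  exact hG ⟨A', B', hAB.mono hA' hB', hA'card, hB'card,
    fun a ha b hb => hall a (hA' ha) b (hB' hb)⟩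

lemma le_card_filter_not_adj_of_not_tComplete {G : SimpleGraph V} [DecidableRel G.Adj] {t : ℕ}
    {v : V} {P : Finset V} (h : ¬ tComplete G t v P) : t ≤ #{x ∈ P | ¬ G.Adj v x} := by
  have hset : (P : Set V) \ {x | G.Adj v x} = ↑{x ∈ P | ¬ G.Adj v x} := by
    ext x; simp
  rwa [tComplete, hset, Set.ncard_coe_finset, not_lt] at h

lemma edist_le_one_of_flipped_of_not_adj [Fintype V] [DecidableEq V]
    {Prt : Finpartition (univ : Finset V)} {G H : SimpleGraph V} {f : Finset V → Finset V → Bool}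
    (hflip : ∀ u v : V, u ≠ v → ∀ A ∈ Prt.parts, ∀ B ∈ Prt.parts, u ∈ A → v ∈ B →
        (H.Adj u v ↔ Xor' (G.Adj u v) (f A B = true)))
    {A B : Finset V} (hA : A ∈ Prt.parts) (hB : B ∈ Prt.parts) (hf : f A B = true)
    {x y : V} (hx : x ∈ A) (hy : y ∈ B) (hxy : ¬ G.Adj x y) : H.edist x y ≤ 1 := by
  rw [SimpleGraph.edist_le_one_iff_adj_or_eq, or_iff_not_imp_right]
  intro hne
  simp [hflip x y hne A hA B hB hx hy, Xor', hxy, hf]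

theorem stmt13_general [Fintype V] [DecidableEq V] (t : ℕ) (G H : SimpleGraph V)
    (hG : KttFree t G) (Prt : Finpartition (Finset.univ : Finset V))
    (f : Finset V → Finset V → Bool)
    (hflip : ∀ u v : V, u ≠ v → ∀ A ∈ Prt.parts, ∀ B ∈ Prt.parts, u ∈ A → v ∈ B →
        (H.Adj u v ↔ Xor' (G.Adj u v) (f A B = true)))
    (u v : V) (P Q : Finset V) (hP : P ∈ Prt.parts) (hQ : Q ∈ Prt.parts)
    (huP : u ∈ P) (hvQ : v ∈ Q)
    (hfPQ : f P Q = true)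
    (hu : ¬ tComplete G t u Q) (hv : ¬ tComplete G t v P) :
    ∃ p : H.Walk u v, p.length ≤ 3 := by
  classical
  set Q' := {x ∈ Q | ¬ G.Adj u x}
  set P' := {y ∈ P | ¬ G.Adj v y}
  have hu_Q' : ∀ x ∈ Q', H.edist u x ≤ 1 := fun x hx =>
    edist_le_one_of_flipped_of_not_adj hflip hP hQ hfPQ huP (mem_filter.1 hx).1 (mem_filter.1 hx).2
  have hP'_v : ∀ y ∈ P', H.edist y v ≤ 1 := fun y hy =>
    edist_le_one_of_flipped_of_not_adj hflip hP hQ hfPQ (mem_filter.1 hy).1 hvQ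
      (fun h => (mem_filter.1 hy).2 h.symm)
  apply SimpleGraph.exists_walk_length_le_of_edist_le
  by_cases hdisj : Disjoint Q' P'
  · obtain ⟨x, hx, y, hy, hxy⟩ := hG.exists_not_adj_s13 hdisj
      (le_card_filter_not_adj_of_not_tComplete hu) (le_card_filter_not_adj_of_not_tComplete hv)
    have hx_y : H.edist x y ≤ 1 := SimpleGraph.edist_comm (G := H) ▸
      edist_le_one_of_flipped_of_not_adj hflip hP hQ hfPQ (mem_filter.1 hy).1 (mem_filter.1 hx).1
        (fun h => hxy h.symm)
    calc H.edist u v ≤ H.edist u x + H.edist x y + H.edist y v :=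
          H.edist_triangle.trans (by gcongr; exact H.edist_triangle)
      _ ≤ 1 + 1 + 1 := add_le_add (add_le_add (hu_Q' x hx) hx_y) (hP'_v y hy)
      _ = (3 : ℕ) := by norm_num
  · obtain ⟨z, hzQ', hzP'⟩ := not_disjoint_iff.1 hdisj
    calc H.edist u v ≤ H.edist u z + H.edist z v := H.edist_triangle
      _ ≤ 1 + 1 := add_le_add (hu_Q' z hzQ') (hP'_v z hzP')
      _ ≤ (3 : ℕ) := by norm_num

/-- Let `G` be `K_{t,t}`-free, `uv ∈ E(G)` with `u ∈ P`, `v ∈ Q` for parts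
`P, Q` of `Prt`, and let `H` be a `Prt`-flip of `G` in which the pair `(P, Q)` is flipped.
If `u` is not `t`-complete to `Q`, `v` is not `t`-complete to `P`, and `|P|, |Q| ≥ t²`,
then `dist_H(u, v) ≤ 3`. -/
theorem stmt13 [Fintype V] [DecidableEq V] (t : ℕ) (G H : SimpleGraph V)
    (hG : KttFree t G) (Prt : Finpartition (Finset.univ : Finset V))
    (f : Finset V → Finset V → Bool) (hsymm : ∀ A B, f A B = f B A)
    (hflip : ∀ u v : V, u ≠ v → ∀ A ∈ Prt.parts, ∀ B ∈ Prt.parts, u ∈ A → v ∈ B →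
        (H.Adj u v ↔ Xor' (G.Adj u v) (f A B = true)))
    (u v : V) (P Q : Finset V) (hP : P ∈ Prt.parts) (hQ : Q ∈ Prt.parts)
    (huP : u ∈ P) (hvQ : v ∈ Q) (huv : G.Adj u v)
    (hfPQ : f P Q = true)
    (hu : ¬ tComplete G t u Q) (hv : ¬ tComplete G t v P)
    (hPbig : t ^ 2 ≤ P.card) (hQbig : t ^ 2 ≤ Q.card) :
    ∃ p : H.Walk u v, p.length ≤ 3 :=
  stmt13_general t G H hG Prt f hflip u v P Q hP hQ huP hvQ hfPQ hu hv
end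

section
/- Let G be a finite graph, r ≥ 1, and suppose sw_{2r}(G) ≤ k, witnessed by an ordering v_1 < … < v_n with sets S_i = {v_1,…,v_i}. In the Cops and Robber game of radius r, the strategy where in round i the cops occupy sep_{2r}(w_{i-1}/S_{i-1}) ∪ {v_i} (with w_{i-1} the robber's current position) maintains the invariant that the robber's path in round i avoids S_{i-1}; hence the cops win within n rounds using at most k+1 cops, and copwidth_r(G) ≤ sw_{2r}(G) + 1. -/
/-
Order the vertices v₀ < v₁ < … by an ordering witnessing `sw_{2r}(G)`, let `Sᵢ` be the set of the
first `i` vertices, and in round `i + 1` let the cops occupy `sep_{2r}(wᵢ/Sᵢ) ∪ {vᵢ}`, where `wᵢ` is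
the robber's position. Invariant: `wᵢ ∉ Sᵢ` and the robber's walk in round `i + 1` avoids `Sᵢ`.
If the walk of round `i + 2` met `Sᵢ₊₁`, its first vertex `x` there would lie in
`sep_{2r}(wᵢ₊₁/Sᵢ₊₁)`, and also either be `vᵢ` or, via the previous walk (of length `≤ r`), lie in
`sep_{2r}(wᵢ/Sᵢ)`; so `x` would be held by a cop in both rounds. Once `Sᵢ` is everything, the
invariant is impossible, so the robber is caught.
-/

open Finset

variable {V : Type*}

/-- The radius-`r` copwidth of `G`: the least `k` such that the cops have a winning
strategy `σ` (mapping the robber's position history to at most `k` cop positions) in the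
Cops and Robber game where the robber moves at speed `r`: for every play — `C 0 = ∅`,
`C (i+1)` given by the strategy, and the robber moving along a walk of length at most `r`
avoiding the stationary cops `C (i+1) ∩ C i` — the robber is eventually caught. -/
noncomputable def copwidth [Fintype V] [DecidableEq V] (G : SimpleGraph V) (r : ℕ) : ℕ :=
  sInf {k | ∃ σ : List V → Finset V, (∀ h, (σ h).card ≤ k) ∧
    ∀ (w : ℕ → V) (C : ℕ → Finset V),
      C 0 = ∅ →
      (∀ i, C (i + 1) = σ ((List.range (i + 1)).map w)) →
      (∀ i, ∃ p : G.Walk (w i) (w (i + 1)), p.length ≤ r ∧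
          ∀ x ∈ p.support, x ∉ C (i + 1) ∩ C i) →
      ∃ i, w (i + 1) ∈ C (i + 1)}

namespace SimpleGraph.Walk

lemma exists_walk_to_first_mem {G : SimpleGraph V} {a b : V} (p : G.Walk a b) {T : Set V}
    (h : ∃ x ∈ p.support, x ∈ T) :
    ∃ x ∈ T, x ∈ p.support ∧ ∃ q : G.Walk a x, q.length ≤ p.length ∧
      ∀ y ∈ q.support, y ≠ x → y ∉ T := by
  induction p with
  | nil =>
    obtain ⟨x, hx, hxT⟩ := h
    rw [support_nil, List.mem_singleton] at hx
    subst hx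
    exact ⟨_, hxT, start_mem_support _, nil, le_rfl, by simp⟩
  | @cons u _ _ hadj p ih =>
    by_cases hu : u ∈ T
    · exact ⟨u, hu, start_mem_support _, nil, by simp, by simp⟩
    · obtain ⟨x, hxT, hxp, q, hq, hqT⟩ := ih (by simpa [hu] using h)
      refine ⟨x, hxT, by simp [hxp], cons hadj q, by simpa using hq, ?_⟩
      simp only [support_cons, List.mem_cons, forall_eq_or_imp]
      exact ⟨fun _ => hu, hqT⟩

end SimpleGraph.Walk

lemma mem_sepSet_of_walk {G : SimpleGraph V} {s : ℕ} {a x : V} {S : Set V} (hx : x ∈ S)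
    (q : G.Walk a x) (hlen : q.length ≤ s) (hq : ∀ y ∈ q.support, y ≠ x → y ∉ S) :
    x ∈ sepSet G s a S :=
  ⟨hx, q, hlen, fun y hy _ hyx => hq y hy hyx⟩

lemma mem_sepSet_of_append {G : SimpleGraph V} {s : ℕ} {a b x : V} {S : Set V} (hx : x ∈ S)
    (p : G.Walk a b) (hp : ∀ y ∈ p.support, y ∉ S) (q : G.Walk b x)
    (hq : ∀ y ∈ q.support, y ≠ x → y ∉ S) (hlen : p.length + q.length ≤ s) :
    x ∈ sepSet G s a S := by
  refine mem_sepSet_of_walk hx (p.append q) (by rwa [SimpleGraph.Walk.length_append]) ?_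
  intro y hy hyx
  rcases List.mem_append.mp (SimpleGraph.Walk.support_append p q ▸ hy) with hy | hy
  · exact hp y hy
  · exact hq y (List.mem_of_mem_tail hy) hyx

lemma exists_sWOrd_sepWidth [Fintype V] (G : SimpleGraph V) (r : ℕ) :
    ∃ ord : V → ℕ, Function.Injective ord ∧ SWOrd G r ord (sepWidth G r) := by
  refine Nat.sInf_mem (s := {k | ∃ ord : V → ℕ, Function.Injective ord ∧ SWOrd G r ord k})
    ⟨Fintype.card V, fun v => Fintype.equivFin V v,
    Fin.val_injective.comp (Fintype.equivFin V).injective, fun S _ v _ => ?_⟩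
  simpa using Set.ncard_le_card (sepSet G r v S)

def initSeg (ord : V → ℕ) (i : ℕ) : Set V := {u | ord u < i}

lemma downClosed_initSeg (ord : V → ℕ) (i : ℕ) : DownClosed ord (initSeg ord i) :=
  fun _ _ huv hv => lt_of_le_of_lt huv hv

open Classical in
/-- The cops of round `i + 1` against a robber on `v`. The `if` only makes the size bound
unconditional: in a play the robber is never in `initSeg ord i`. -/
noncomputable def copSet [Fintype V] (G : SimpleGraph V) (r : ℕ) (ord : V → ℕ) (i : ℕ) (v : V) :
    Finset V :=
  (if v ∈ initSeg ord i then ∅ else (sepSet G r v (initSeg ord i)).toFinset) ∪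
    univ.filter (fun u => ord u = i)

/-- The strategy reads the round number off the length of the robber's history. -/
noncomputable def copStrategy [Fintype V] (G : SimpleGraph V) (r : ℕ) (ord : V → ℕ)
    (h : List V) : Finset V :=
  h.getLast?.elim ∅ (copSet G r ord (h.length - 1))

section CopSet

variable [Fintype V] {G : SimpleGraph V} {r : ℕ} {ord : V → ℕ}

lemma mem_copSet {i : ℕ} {v x : V} (hv : v ∉ initSeg ord i) :
    x ∈ copSet G r ord i v ↔ x ∈ sepSet G r v (initSeg ord i) ∨ ord x = i := by
  simp [copSet, hv]

lemma card_copSet_le {k : ℕ} (hinj : Function.Injective ord) (hsw : SWOrd G r ord k)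
    (i : ℕ) (v : V) : (copSet G r ord i v).card ≤ k + 1 := by
  classical
  refine (card_union_le _ _).trans (add_le_add ?_ ?_)
  · split_ifs with hv
    · simp
    · rw [← Set.ncard_eq_toFinset_card']
      exact hsw _ (downClosed_initSeg ord i) v hv
  · exact card_le_one.mpr fun a ha b hb => hinj <| by
      rw [(mem_filter.mp ha).2, (mem_filter.mp hb).2]

lemma card_copStrategy_le {k : ℕ} (hinj : Function.Injective ord) (hsw : SWOrd G r ord k)
    (h : List V) : (copStrategy G r ord h).card ≤ k + 1 := by
  unfold copStrategy
  cases h.getLast? with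
  | none => simp
  | some v => exact card_copSet_le hinj hsw _ v

lemma copStrategy_map_range (w : ℕ → V) (i : ℕ) :
    copStrategy G r ord ((List.range (i + 1)).map w) = copSet G r ord i (w i) := by
  simp [copStrategy, List.range_succ]

end CopSet

section Invariant

variable [Fintype V] {G : SimpleGraph V} {r : ℕ} {ord : V → ℕ} {w : ℕ → V}
  {C : ℕ → Finset V} {p : ∀ i, G.Walk (w i) (w (i + 1))}

lemma notMem_initSeg_succ {i : ℕ} (hC : C (i + 1) = copSet G (2 * r) ord i (w i))
    (hw : w i ∉ initSeg ord i) (hp : ∀ x ∈ (p i).support, x ∉ initSeg ord i)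
    (hfree : w (i + 1) ∉ C (i + 1)) : w (i + 1) ∉ initSeg ord (i + 1) := by
  intro hmem
  have hi : ord (w (i + 1)) = i := by
    have hlt : ord (w (i + 1)) < i + 1 := hmem
    have hge : ¬ ord (w (i + 1)) < i := hp _ (p i).end_mem_support
    omega
  exact hfree (hC ▸ (mem_copSet hw).mpr (Or.inr hi))

variable [DecidableEq V]

lemma walk_succ_avoids_initSeg {i : ℕ} (hC : ∀ j, C (j + 1) = copSet G (2 * r) ord j (w j))
    (hlen : ∀ j, (p j).length ≤ r) (hcops : ∀ j, ∀ x ∈ (p j).support, x ∉ C (j + 1) ∩ C j)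
    (hw : w i ∉ initSeg ord i) (hp : ∀ x ∈ (p i).support, x ∉ initSeg ord i)
    (hw' : w (i + 1) ∉ initSeg ord (i + 1)) :
    ∀ x ∈ (p (i + 1)).support, x ∉ initSeg ord (i + 1) := by
  by_contra! hmeet
  obtain ⟨x, hxS, hxp, q, hq, hqS⟩ := (p (i + 1)).exists_walk_to_first_mem hmeet
  have hx_next : x ∈ C (i + 2) := (hC (i + 1)) ▸ (mem_copSet hw').mpr
    (Or.inl (mem_sepSet_of_walk hxS q (by linarith [hlen (i + 1)]) hqS))
  have hx_cur : x ∈ C (i + 1) := by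
    refine (hC i) ▸ (mem_copSet hw).mpr ?_
    by_cases hxi : ord x = i
    · exact Or.inr hxi
    · have hxS' : x ∈ initSeg ord i := by
        have hlt : ord x < i + 1 := hxS
        show ord x < i
        omega
      refine Or.inl (mem_sepSet_of_append hxS' (p i) hp q
        (fun y hy hyx hyS => hqS y hy hyx (lt_trans hyS i.lt_succ_self)) ?_)
      linarith [hlen i, hlen (i + 1)]
  exact hcops (i + 1) x hxp (mem_inter.mpr ⟨hx_next, hx_cur⟩)

lemma robber_avoids_initSeg (hC : ∀ j, C (j + 1) = copSet G (2 * r) ord j (w j))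
    (hlen : ∀ j, (p j).length ≤ r) (hcops : ∀ j, ∀ x ∈ (p j).support, x ∉ C (j + 1) ∩ C j)
    (hfree : ∀ j, w (j + 1) ∉ C (j + 1)) (i : ℕ) :
    w i ∉ initSeg ord i ∧ ∀ x ∈ (p i).support, x ∉ initSeg ord i := by
  induction i with
  | zero => simp [initSeg]
  | succ i ih =>
    have hw' := notMem_initSeg_succ (hC i) ih.1 ih.2 (hfree i)
    exact ⟨hw', walk_succ_avoids_initSeg hC hlen hcops ih.1 ih.2 hw'⟩

end Invariant

theorem stmt15_general [Fintype V] [DecidableEq V] (G : SimpleGraph V) (r : ℕ) :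
    copwidth G r ≤ sepWidth G (2 * r) + 1 := by
  obtain ⟨ord, hinj, hsw⟩ := exists_sWOrd_sepWidth G (2 * r)
  refine Nat.sInf_le ⟨copStrategy G (2 * r) ord, card_copStrategy_le hinj hsw, ?_⟩
  intro w C _ hC hmove
  choose p hlen hcops using hmove
  by_contra! hfree
  have hC' j : C (j + 1) = copSet G (2 * r) ord j (w j) := (hC j).trans (copStrategy_map_range w j)
  exact (robber_avoids_initSeg hC' hlen hcops hfree (univ.sup ord + 1)).1
    (Nat.lt_succ_of_le (le_sup (mem_univ _)))

/-- `copwidth_r(G) ≤ sw_{2r}(G) + 1`. -/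
theorem stmt15 [Fintype V] [DecidableEq V] (G : SimpleGraph V) (r : ℕ) (hr : 1 ≤ r) :
    copwidth G r ≤ sepWidth G (2 * r) + 1 :=
  stmt15_general G r
end
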